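/- In Z_123, let H = {1,10,16,37,100}, and for a subset S of Z_123 let HS = {h·s mod 123 : h ∈ H, s ∈ S}. Then the pair X = H{0,1,3,6,11,13,28,29,33,35,43,45,59}, Y = H{4,5,6,11,14,15,18,19,22,28,33,41,45} is a difference family in Z_123 with parameters (123; 61, 61; 60). In particular, cyclic Legendre pairs of length 123 exist. -/

import Mathlib

open Finset

/-- The number of ordered pairs `(a,b) ∈ X × X` with `a - b = s`. -/
def diffCount (X : Finset (ZMod 123)) (s : ZMod 123) : ℕ :=
  ((X ×ˢ X).filter (fun p => p.1 - p.2 = s)).card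

def H : Finset (ZMod 123) := {1, 10, 16, 37, 100}

def X : Finset (ZMod 123) := (H ×ˢ ({0, 1, 3, 6, 11, 13, 28, 29, 33, 35, 43, 45, 59} : Finset (ZMod 123))).image (fun p => p.1 * p.2)

def Y : Finset (ZMod 123) := (H ×ˢ ({4, 5, 6, 11, 14, 15, 18, 19, 22, 28, 33, 41, 45} : Finset (ZMod 123))).image (fun p => p.1 * p.2)

/-!
The difference counts `λ_X(s)`, `λ_Y(s)` are unchanged by `s ↦ -s` (swap the pair) and by
`s ↦ 10 s`: `H = {1, 10, 10², 10³, 10⁴}` is the subgroup of `(ℤ/123)ˣ` generated by `10`, so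
`X = H·S` and `Y = H·T` are fixed by multiplication by `10`. Hence `λ_X + λ_Y = 60` only needs
to be checked on one representative of each of the 13 orbits of `±H` on the nonzero residues.
Writing `f = 2·1_X - 1`, the periodic autocorrelation of `f` at `s` is `v - 4|X| + 4 λ_X(s)`,
so `λ_X + λ_Y = 60` makes the two autocorrelations sum to `2·123 - 4·122 + 4·60 = -2`.
-/

open scoped Pointwise

section DifferenceCount

variable {G : Type*} [DecidableEq G]

def signIndicator (A : Finset G) (x : G) : ℤ := if x ∈ A then 1 else -1

theorem signIndicator_eq_one_or_eq_neg_one (A : Finset G) (x : G) :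
    signIndicator A x = 1 ∨ signIndicator A x = -1 := by
  unfold signIndicator
  split_ifs <;> simp

variable [AddCommGroup G]

theorem card_filter_sub_eq_neg (A : Finset G) (s : G) :
    #{p ∈ A ×ˢ A | p.1 - p.2 = -s} = #{p ∈ A ×ˢ A | p.1 - p.2 = s} := by
  refine card_nbij' Prod.swap Prod.swap (fun p hp => ?_) (fun p hp => ?_)
    (fun _ _ => rfl) (fun _ _ => rfl) <;>
  · simp only [coe_filter, mem_product, Set.mem_ofPred_eq, Prod.fst_swap, Prod.snd_swap] at hp ⊢
    exact ⟨hp.1.symm, by rw [← neg_sub]; simp [hp.2]⟩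

theorem card_filter_sub_eq_smul {M : Type*} [Group M] [DistribMulAction M G] {A : Finset G}
    {u : M} (hu : u • A = A) (s : G) :
    #{p ∈ A ×ˢ A | p.1 - p.2 = u • s} = #{p ∈ A ×ˢ A | p.1 - p.2 = s} := by
  have mem_iff (x : G) : u • x ∈ A ↔ x ∈ A := by
    conv_lhs => rw [← hu]
    exact smul_mem_smul_finset_iff u
  refine card_nbij' (u⁻¹ • ·) (u • ·) (fun p hp => ?_) (fun p hp => ?_)
    (fun p _ => smul_inv_smul u p) (fun p _ => inv_smul_smul u p)
  · simp only [coe_filter, mem_product, Set.mem_ofPred_eq] at hp ⊢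
    refine ⟨⟨?_, ?_⟩, ?_⟩
    · rw [← mem_iff]; simpa using hp.1.1
    · rw [← mem_iff]; simpa using hp.1.2
    · rw [Prod.smul_fst, Prod.smul_snd, ← smul_sub, hp.2, inv_smul_smul]
  · simp only [coe_filter, mem_product, Set.mem_ofPred_eq] at hp ⊢
    exact ⟨⟨(mem_iff _).2 hp.1.1, (mem_iff _).2 hp.1.2⟩, by
      rw [Prod.smul_fst, Prod.smul_snd, ← smul_sub, hp.2]⟩

theorem card_filter_add_mem_eq (A : Finset G) (s : G) :
    #{x ∈ A | x + s ∈ A} = #{p ∈ A ×ˢ A | p.1 - p.2 = s} := by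
  refine card_nbij' (fun x => (x + s, x)) Prod.snd
    (fun x hx => by simp_all) (fun p hp => ?_) (fun _ _ => rfl) (fun p hp => ?_) <;>
  · simp only [coe_filter, mem_product, Set.mem_ofPred_eq] at hp
    simp [← hp.2, hp.1.1, hp.1.2]

variable [Fintype G]

theorem sum_signIndicator_mul_add (A : Finset G) (s : G) :
    ∑ x, signIndicator A x * signIndicator A (x + s) =
      Fintype.card G - 4 * #A + 4 * #{p ∈ A ×ˢ A | p.1 - p.2 = s} := by
  let a : G → ℤ := fun x => if x ∈ A then 1 else 0
  have sign_eq (x : G) : signIndicator A x = 2 * a x - 1 := by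
    simp only [signIndicator, a]; split_ifs <;> norm_num
  have sum_a : ∑ x, a x = #A := by simp [a]
  have sum_a_add : ∑ x, a (x + s) = #A := Equiv.sum_comp (Equiv.addRight s) a ▸ sum_a
  have sum_a_mul : ∑ x, a x * a (x + s) = #{p ∈ A ×ˢ A | p.1 - p.2 = s} := by
    rw [← card_filter_add_mem_eq]
    simp only [a, ite_zero_mul_ite_zero, mul_one, sum_boole]
    congr 2
    ext x
    simp
  calc ∑ x, signIndicator A x * signIndicator A (x + s)
      = ∑ x, (4 * (a x * a (x + s)) - 2 * a x - 2 * a (x + s) + 1) := by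
        simp only [sign_eq]; congr! 1; ring
    _ = _ := by
        simp only [sum_add_distrib, sum_sub_distrib, ← mul_sum, sum_a, sum_a_add, sum_a_mul,
          sum_const, card_univ, nsmul_eq_mul, mul_one]
        ring

/-- The hypothesis is `λ = k₁ + k₂ - (v + 1) / 2` with the division cleared. -/
theorem sum_signIndicator_add_sum_signIndicator {A B : Finset G} {s : G}
    (hdiff : 2 * (#{p ∈ A ×ˢ A | p.1 - p.2 = s} + #{p ∈ B ×ˢ B | p.1 - p.2 = s}) +
      Fintype.card G + 1 = 2 * (#A + #B)) :
    ∑ x, signIndicator A x * signIndicator A (x + s) +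
      ∑ x, signIndicator B x * signIndicator B (x + s) = -2 := by
  rw [sum_signIndicator_mul_add, sum_signIndicator_mul_add]
  have := congrArg (Nat.cast : ℕ → ℤ) hdiff
  push_cast at this
  linarith

end DifferenceCount

def unitTen : (ZMod 123)ˣ := ⟨10, 37, by decide, by decide⟩

theorem unitTen_smul_H : unitTen • H = H := by decide

theorem unitTen_smul_X : unitTen • X = X := by
  change unitTen • (H * _) = H * _
  rw [← smul_mul_assoc, unitTen_smul_H]

theorem unitTen_smul_Y : unitTen • Y = Y := by
  change unitTen • (H * _) = H * _
  rw [← smul_mul_assoc, unitTen_smul_H]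

theorem ten_pow_mul_eq_smul (k : ℕ) (s : ZMod 123) : 10 ^ k * s = unitTen ^ k • s := by
  rw [Units.smul_def, Units.val_pow_eq_pow_val]; rfl

theorem diffCount_ten_pow_mul {A : Finset (ZMod 123)} (hA : unitTen • A = A) (k : ℕ)
    (s : ZMod 123) : diffCount A (10 ^ k * s) = diffCount A s := by
  rw [ten_pow_mul_eq_smul]
  refine card_filter_sub_eq_smul ?_ s
  exact MulAction.mem_stabilizer_iff.1 (pow_mem (MulAction.mem_stabilizer_iff.2 hA) k)

theorem diffCount_neg (A : Finset (ZMod 123)) (s : ZMod 123) :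
    diffCount A (-s) = diffCount A s :=
  card_filter_sub_eq_neg A s

/-- The hypothesis says that `s` is the least residue in its orbit under `±⟨10⟩`. -/
theorem diffCount_X_add_diffCount_Y_of_orbit_min :
    ∀ s : ZMod 123, s ≠ 0 → (∀ k < 5, s.val ≤ (10 ^ k * s).val ∧ s.val ≤ (-(10 ^ k * s)).val) →
      diffCount X s + diffCount Y s = 60 := by
  decide +kernel

theorem diffCount_X_add_diffCount_Y (s : ZMod 123) (hs : s ≠ 0) :
    diffCount X s + diffCount Y s = 60 := by
  induction h : s.val using Nat.strong_induction_on generalizing s with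
  | _ n ih =>
  by_cases hmin : ∀ k < 5, s.val ≤ (10 ^ k * s).val ∧ s.val ≤ (-(10 ^ k * s)).val
  · exact diffCount_X_add_diffCount_Y_of_orbit_min s hs hmin
  push Not at hmin
  obtain ⟨k, -, hlt⟩ := hmin
  have hks : 10 ^ k * s ≠ 0 := by rwa [ten_pow_mul_eq_smul, smul_ne_zero_iff_ne]
  rw [← diffCount_ten_pow_mul unitTen_smul_X k, ← diffCount_ten_pow_mul unitTen_smul_Y k]
  by_cases hle : s.val ≤ (10 ^ k * s).val
  · rw [← diffCount_neg X, ← diffCount_neg Y]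
    exact ih _ (h ▸ hlt hle) _ (neg_ne_zero.2 hks) rfl
  · exact ih _ (h ▸ not_le.1 hle) _ hks rfl

theorem card_X : X.card = 61 := by decide +kernel

theorem card_Y : Y.card = 61 := by decide +kernel

theorem stmt_8 :
    X.card = 61 ∧ Y.card = 61 ∧
    (∀ s : ZMod 123, s ≠ 0 → diffCount X s + diffCount Y s = 60) ∧
    ∃ f g : ZMod 123 → ℤ,
      (∀ x, f x = 1 ∨ f x = -1) ∧ (∀ x, g x = 1 ∨ g x = -1) ∧
      ∀ s : ZMod 123, s ≠ 0 →
        (∑ x : ZMod 123, f x * f (x + s)) + (∑ x : ZMod 123, g x * g (x + s)) = -2 := by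
  refine ⟨card_X, card_Y, diffCount_X_add_diffCount_Y, signIndicator X, signIndicator Y,
    signIndicator_eq_one_or_eq_neg_one X, signIndicator_eq_one_or_eq_neg_one Y, fun s hs => ?_⟩
  apply sum_signIndicator_add_sum_signIndicator
  change 2 * (diffCount X s + diffCount Y s) + _ + 1 = _
  rw [diffCount_X_add_diffCount_Y s hs, ZMod.card, card_X, card_Y]
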